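/- Second Green's formula for the Laplacian: for all f0, g0 ∈ H0^2 := {f ∈ dom d : df ∈ dom δ}, one has ⟨δd f0, g0⟩ - ⟨f0, δd g0⟩ = ⟨γ0 f0, γ1 d g0⟩_{G^{1/2}} - ⟨γ1 d f0, γ0 g0⟩_{G^{1/2}}. -/

import Mathlib

open scoped InnerProductSpace
open ContinuousLinearMap

/-!
Write `B f g = ⟪d f, ι1 g⟫ - ⟪ι0 f, δ g⟫`. The second Green formula is the difference of two
instances of the first, `B f g = ⟪n, b⟫` for a harmonic `n` with the trace of `f` and any `b` whose
trace is `γ1 g`. To prove the first formula, replace `f` by `n` (their difference has zero trace);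
then `B n g = ⟪h, g⟫` in `dom δ`, where `ι1 h = d n` and `δ h = -ι0 n`. Split `g = y + r` along the
closed subspace `K` of those `g` for which `B · g` vanishes identically. Then `⟪h, y⟫ = 0` and
`γ1 y = 0`, while `r ∈ Kᗮ` is of the form `δ r = ι0 p`, `ι1 r = -d p`, because the graph of `d` is
closed and `δ` is the adjoint of `d` on `ker γ0`. Hence `γ1 r = -γ0 p`, so `b + p` has zero trace
and is orthogonal to `n`, and `⟪h, r⟫ = -⟪n, p⟫ = ⟪n, b⟫`.
-/

section GraphOrthogonal

variable {𝕜 E F₀ F₁ : Type*} [RCLike 𝕜]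
  [NormedAddCommGroup E] [InnerProductSpace 𝕜 E] [CompleteSpace E]
  [NormedAddCommGroup F₀] [InnerProductSpace 𝕜 F₀]
  [NormedAddCommGroup F₁] [InnerProductSpace 𝕜 F₁]

/-- If `E` carries the graph inner product of `A ⊕ B`, then the graph `{(A p, B p)}` is closed in
`F₀ ⊕ F₁`, hence equal to its double orthogonal complement. -/
theorem exists_apply_eq_of_forall_inner_graph_eq_zero (A : E →L[𝕜] F₀) (B : E →L[𝕜] F₁)
    (hAB : ∀ f g : E, ⟪f, g⟫_𝕜 = ⟪A f, A g⟫_𝕜 + ⟪B f, B g⟫_𝕜) (u₀ : F₀) (u₁ : F₁)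
    (hu : ∀ (v₀ : F₀) (v₁ : F₁), (∀ f : E, ⟪A f, v₀⟫_𝕜 + ⟪B f, v₁⟫_𝕜 = 0) →
      ⟪u₀, v₀⟫_𝕜 + ⟪u₁, v₁⟫_𝕜 = 0) :
    ∃ p : E, A p = u₀ ∧ B p = u₁ := by
  set p := (InnerProductSpace.toDual 𝕜 E).symm ((innerSL 𝕜 u₀).comp A + (innerSL 𝕜 u₁).comp B)
  have hp (f : E) : ⟪f, p⟫_𝕜 = ⟪A f, u₀⟫_𝕜 + ⟪B f, u₁⟫_𝕜 := by
    rw [← inner_conj_symm, InnerProductSpace.toDual_symm_apply]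
    simp
  have hperp (f : E) : ⟪A f, A p - u₀⟫_𝕜 + ⟪B f, B p - u₁⟫_𝕜 = 0 := by
    rw [inner_sub_right, inner_sub_right]
    linear_combination (hAB f p).symm + hp f
  have hself : ⟪A p - u₀, A p - u₀⟫_𝕜 + ⟪B p - u₁, B p - u₁⟫_𝕜 = 0 := by
    rw [inner_sub_left (A p), inner_sub_left (B p)]
    linear_combination hperp p - hu _ _ hperp
  rw [inner_self_eq_norm_sq_to_K, inner_self_eq_norm_sq_to_K] at hself
  norm_cast at hself
  rw [add_eq_zero_iff_of_nonneg (sq_nonneg _) (sq_nonneg _)] at hself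
  exact ⟨p, by simpa [sub_eq_zero] using hself⟩

end GraphOrthogonal

section BoundaryTriple

variable {𝕜 H0 H1 H01 H11 G : Type*} [RCLike 𝕜]
  [NormedAddCommGroup H0] [InnerProductSpace 𝕜 H0]
  [NormedAddCommGroup H1] [InnerProductSpace 𝕜 H1]
  [NormedAddCommGroup H01] [InnerProductSpace 𝕜 H01]
  [NormedAddCommGroup H11] [InnerProductSpace 𝕜 H11]
  [NormedAddCommGroup G] [InnerProductSpace 𝕜 G]
  (ι0 : H01 →L[𝕜] H0) (d : H01 →L[𝕜] H1) (ι1 : H11 →L[𝕜] H1) (δ : H11 →L[𝕜] H0)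

/-- The `g` on which `δ` is adjoint to `d` on all of `dom d`, i.e. the kernel of `γ1`. -/
noncomputable def adjointDomain : Submodule 𝕜 H11 :=
  LinearMap.ker
    (ContinuousLinearMap.pi fun f : H01 => (innerSL 𝕜 (d f)).comp ι1 - (innerSL 𝕜 (ι0 f)).comp δ :
      H11 →ₗ[𝕜] H01 → 𝕜)

variable {ι0 d ι1 δ}

theorem mem_adjointDomain {g : H11} :
    g ∈ adjointDomain ι0 d ι1 δ ↔ ∀ f : H01, ⟪d f, ι1 g⟫_𝕜 = ⟪ι0 f, δ g⟫_𝕜 := by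
  simp [adjointDomain, funext_iff, sub_eq_zero]

variable (ι0 d ι1 δ) in
theorem isClosed_adjointDomain : IsClosed (adjointDomain ι0 d ι1 δ : Set H11) :=
  ContinuousLinearMap.isClosed_ker _

theorem inner_eq_zero_of_mem_adjointDomain
    (hgraph1 : ∀ f g : H11, ⟪f, g⟫_𝕜 = ⟪ι1 f, ι1 g⟫_𝕜 + ⟪δ f, δ g⟫_𝕜)
    {n : H01} {h : H11} (hh1 : ι1 h = d n) (hh2 : δ h = -(ι0 n))
    {y : H11} (hy : y ∈ adjointDomain ι0 d ι1 δ) : ⟪h, y⟫_𝕜 = 0 := by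
  rw [hgraph1, hh1, hh2, inner_neg_left, mem_adjointDomain.1 hy n, add_neg_cancel]

theorem inner_eq_zero_of_harmonic_of_trace_eq_zero {γ0 : H01 →L[𝕜] G}
    (hgraph0 : ∀ f g : H01, ⟪f, g⟫_𝕜 = ⟪ι0 f, ι0 g⟫_𝕜 + ⟪d f, d g⟫_𝕜)
    (hadj1 : ∀ (g : H11) (f : H01), γ0 f = 0 → ⟪d f, ι1 g⟫_𝕜 = ⟪ι0 f, δ g⟫_𝕜)
    {n : H01} {h : H11} (hh1 : ι1 h = d n) (hh2 : δ h = -(ι0 n))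
    {q : H01} (hq : γ0 q = 0) : ⟪n, q⟫_𝕜 = 0 := by
  have hadj : ⟪ι1 h, d q⟫_𝕜 = ⟪δ h, ι0 q⟫_𝕜 := by
    rw [← inner_conj_symm, hadj1 h q hq, inner_conj_symm]
  rw [hgraph0, ← hh1, show ι0 n = -δ h by rw [hh2, neg_neg], inner_neg_left, hadj, neg_add_cancel]

theorem exists_of_mem_orthogonal_adjointDomain [CompleteSpace H01]
    (hgraph0 : ∀ f g : H01, ⟪f, g⟫_𝕜 = ⟪ι0 f, ι0 g⟫_𝕜 + ⟪d f, d g⟫_𝕜)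
    (hgraph1 : ∀ f g : H11, ⟪f, g⟫_𝕜 = ⟪ι1 f, ι1 g⟫_𝕜 + ⟪δ f, δ g⟫_𝕜)
    (hmax : ∀ (g1 : H1) (h0 : H0), (∀ f : H01, ⟪d f, g1⟫_𝕜 = ⟪ι0 f, h0⟫_𝕜) →
      ∃ g : H11, ι1 g = g1 ∧ δ g = h0)
    {r : H11} (hr : r ∈ (adjointDomain ι0 d ι1 δ)ᗮ) :
    ∃ p : H01, ι0 p = δ r ∧ d p = -(ι1 r) := by
  refine exists_apply_eq_of_forall_inner_graph_eq_zero ι0 d hgraph0 _ _ fun v₀ v₁ hv => ?_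
  obtain ⟨g, hg1, hg2⟩ := hmax v₁ (-v₀) fun f => by
    rw [inner_neg_right]
    linear_combination hv f
  have hg : g ∈ adjointDomain ι0 d ι1 δ := mem_adjointDomain.2 fun f => by
    rw [hg1, hg2, inner_neg_right]
    linear_combination hv f
  have hgr := Submodule.inner_right_of_mem_orthogonal hg hr
  rw [hgraph1, hg1, hg2, ← inner_conj_symm v₁, ← inner_conj_symm (-v₀), ← map_add,
    map_eq_zero, inner_neg_right] at hgr
  rw [inner_neg_left]
  linear_combination -hgr

theorem first_green_formula [CompleteSpace H01] [CompleteSpace H11] {γ0 : H01 →L[𝕜] G}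
    {γ1 : H11 →L[𝕜] G}
    (hgraph0 : ∀ f g : H01, ⟪f, g⟫_𝕜 = ⟪ι0 f, ι0 g⟫_𝕜 + ⟪d f, d g⟫_𝕜)
    (hgraph1 : ∀ f g : H11, ⟪f, g⟫_𝕜 = ⟪ι1 f, ι1 g⟫_𝕜 + ⟪δ f, δ g⟫_𝕜)
    (hadj1 : ∀ (g : H11) (f : H01), γ0 f = 0 → ⟪d f, ι1 g⟫_𝕜 = ⟪ι0 f, δ g⟫_𝕜)
    (hmax : ∀ (g1 : H1) (h0 : H0), (∀ f : H01, ⟪d f, g1⟫_𝕜 = ⟪ι0 f, h0⟫_𝕜) →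
      ∃ g : H11, ι1 g = g1 ∧ δ g = h0)
    (hγ1K : ∀ g ∈ adjointDomain ι0 d ι1 δ, γ1 g = 0)
    (hγ1N : ∀ (g : H11) (p : H01), ι0 p = δ g → d p = -(ι1 g) → γ1 g = -(γ0 p))
    {f n b : H01} {g h : H11} (hh1 : ι1 h = d n) (hh2 : δ h = -(ι0 n))
    (hn : γ0 n = γ0 f) (hb : γ0 b = γ1 g) :
    ⟪d f, ι1 g⟫_𝕜 - ⟪ι0 f, δ g⟫_𝕜 = ⟪n, b⟫_𝕜 := by
  have hfn : ⟪d f, ι1 g⟫_𝕜 - ⟪ι0 f, δ g⟫_𝕜 = ⟪d n, ι1 g⟫_𝕜 - ⟪ι0 n, δ g⟫_𝕜 := by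
    have := hadj1 g (f - n) (by rw [map_sub, hn, sub_self])
    rw [map_sub, map_sub, inner_sub_left, inner_sub_left] at this
    linear_combination this
  have hnh : ⟪d n, ι1 g⟫_𝕜 - ⟪ι0 n, δ g⟫_𝕜 = ⟪h, g⟫_𝕜 := by
    rw [hgraph1, hh1, hh2, inner_neg_left, sub_eq_add_neg]
  have : CompleteSpace (adjointDomain ι0 d ι1 δ) :=
    (isClosed_adjointDomain ι0 d ι1 δ).completeSpace_coe
  obtain ⟨y, hy, r, hr, rfl⟩ :=
    Submodule.exists_add_mem_mem_orthogonal (K := adjointDomain ι0 d ι1 δ) g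
  obtain ⟨p, hp0, hp1⟩ := exists_of_mem_orthogonal_adjointDomain hgraph0 hgraph1 hmax hr
  have hbp : γ0 (b + p) = 0 := by
    rw [map_add, hb, map_add, hγ1K y hy, hγ1N r p hp0 hp1, zero_add, neg_add_cancel]
  have hr1 : ι1 r = -d p := by rw [hp1, neg_neg]
  calc ⟪d f, ι1 (y + r)⟫_𝕜 - ⟪ι0 f, δ (y + r)⟫_𝕜 = ⟪h, y + r⟫_𝕜 := hfn.trans hnh
    _ = ⟪h, r⟫_𝕜 := by
      rw [inner_add_right, inner_eq_zero_of_mem_adjointDomain hgraph1 hh1 hh2 hy, zero_add]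
    _ = -⟪n, p⟫_𝕜 := by
      rw [hgraph1, hgraph0, hh1, hh2, hr1, ← hp0, inner_neg_left, inner_neg_right]
      ring
    _ = ⟪n, b⟫_𝕜 := by
      have := inner_eq_zero_of_harmonic_of_trace_eq_zero hgraph0 hadj1 hh1 hh2 hbp
      rw [inner_add_right] at this
      linear_combination -this

end BoundaryTriple

theorem statement_9_general
    {H0 H1 G H01 H11 : Type*}
    [NormedAddCommGroup H0] [InnerProductSpace ℂ H0]
    [NormedAddCommGroup H1] [InnerProductSpace ℂ H1]
    [NormedAddCommGroup G] [InnerProductSpace ℂ G]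
    [NormedAddCommGroup H01] [InnerProductSpace ℂ H01] [CompleteSpace H01]
    [NormedAddCommGroup H11] [InnerProductSpace ℂ H11] [CompleteSpace H11]
    (ι0 : H01 →L[ℂ] H0) (d : H01 →L[ℂ] H1) (γ0 : H01 →L[ℂ] G)
    (ι1 : H11 →L[ℂ] H1) (δ : H11 →L[ℂ] H0)
    (hgraph0 : ∀ f g : H01, ⟪f, g⟫_ℂ = ⟪ι0 f, ι0 g⟫_ℂ + ⟪d f, d g⟫_ℂ)
    (hgraph1 : ∀ f g : H11, ⟪f, g⟫_ℂ = ⟪ι1 f, ι1 g⟫_ℂ + ⟪δ f, δ g⟫_ℂ)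
    (hadj1 : ∀ (g : H11) (f : H01), γ0 f = 0 → ⟪d f, ι1 g⟫_ℂ = ⟪ι0 f, δ g⟫_ℂ)
    (hadj2 : ∀ (g1 : H1) (h0 : H0),
      (∀ f : H01, γ0 f = 0 → ⟪d f, g1⟫_ℂ = ⟪ι0 f, h0⟫_ℂ) →
      ∃ g : H11, ι1 g = g1 ∧ δ g = h0)
    (γ1 : H11 →L[ℂ] G)
    (hγ1K : ∀ g : H11, (∀ f : H01, ⟪d f, ι1 g⟫_ℂ = ⟪ι0 f, δ g⟫_ℂ) → γ1 g = 0)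
    (hγ1N : ∀ (g : H11) (n : H01),
      (∃ h : H01, ι0 h = δ g ∧ d h = -(ι1 g)) → ι0 n = δ g → γ1 g = -(γ0 n))
    : ∀ (f0 g0 : H01) (gf gg : H11), ι1 gf = d f0 → ι1 gg = d g0 →
      ∀ n m a b : H01,
      (∃ g : H11, ι1 g = d n ∧ δ g = -(ι0 n)) → γ0 n = γ0 f0 →
      (∃ g : H11, ι1 g = d m ∧ δ g = -(ι0 m)) → γ0 m = γ0 g0 →
      (∃ g : H11, ι1 g = d a ∧ δ g = -(ι0 a)) → γ0 a = γ1 gf →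
      (∃ g : H11, ι1 g = d b ∧ δ g = -(ι0 b)) → γ0 b = γ1 gg →
      ⟪δ gf, ι0 g0⟫_ℂ - ⟪ι0 f0, δ gg⟫_ℂ = ⟪n, b⟫_ℂ - ⟪a, m⟫_ℂ := by
  intro f0 g0 gf gg hf hg n m a b ⟨wn, hwn1, hwn2⟩ hγn ⟨wm, hwm1, hwm2⟩ hγm _ hγa _ hγb
  have green : ∀ {f n b : H01} {g h : H11}, ι1 h = d n → δ h = -(ι0 n) → γ0 n = γ0 f →
      γ0 b = γ1 g → ⟪d f, ι1 g⟫_ℂ - ⟪ι0 f, δ g⟫_ℂ = ⟪n, b⟫_ℂ :=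
    first_green_formula hgraph0 hgraph1 hadj1 (fun g1 h0 h => hadj2 g1 h0 fun f _ => h f)
      (fun g hg => hγ1K g (mem_adjointDomain.1 hg))
      (fun g p hp0 hp1 => hγ1N g p ⟨p, hp0, hp1⟩ hp0)
  have green_fg := green hwn1 hwn2 hγn hγb
  have green_gf := green hwm1 hwm2 hγm hγa
  rw [hg] at green_fg
  rw [hf] at green_gf
  have green_gf' : ⟪d f0, d g0⟫_ℂ - ⟪δ gf, ι0 g0⟫_ℂ = ⟪a, m⟫_ℂ := by
    rw [← inner_conj_symm (d f0), ← inner_conj_symm (δ gf), ← map_sub, green_gf, inner_conj_symm]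
  linear_combination green_fg - green_gf'

theorem statement_9
    {H0 H1 G H01 H11 : Type*}
    [NormedAddCommGroup H0] [InnerProductSpace ℂ H0] [CompleteSpace H0]
    [NormedAddCommGroup H1] [InnerProductSpace ℂ H1] [CompleteSpace H1]
    [NormedAddCommGroup G] [InnerProductSpace ℂ G] [CompleteSpace G]
    [NormedAddCommGroup H01] [InnerProductSpace ℂ H01] [CompleteSpace H01]
    [NormedAddCommGroup H11] [InnerProductSpace ℂ H11] [CompleteSpace H11]
    (ι0 : H01 →L[ℂ] H0) (d : H01 →L[ℂ] H1) (γ0 : H01 →L[ℂ] G)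
    (ι1 : H11 →L[ℂ] H1) (δ : H11 →L[ℂ] H0)
    (hι0 : Function.Injective ι0) (hι1 : Function.Injective ι1)
    (hgraph0 : ∀ f g : H01, ⟪f, g⟫_ℂ = ⟪ι0 f, ι0 g⟫_ℂ + ⟪d f, d g⟫_ℂ)
    (hgraph1 : ∀ f g : H11, ⟪f, g⟫_ℂ = ⟪ι1 f, ι1 g⟫_ℂ + ⟪δ f, δ g⟫_ℂ)
    (hdom : Dense (Set.range ι0))
    (hker : Dense (ι0 '' {f : H01 | γ0 f = 0}))
    (hran : Dense (Set.range γ0))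
    (hadj1 : ∀ (g : H11) (f : H01), γ0 f = 0 → ⟪d f, ι1 g⟫_ℂ = ⟪ι0 f, δ g⟫_ℂ)
    (hadj2 : ∀ (g1 : H1) (h0 : H0),
      (∀ f : H01, γ0 f = 0 → ⟪d f, g1⟫_ℂ = ⟪ι0 f, h0⟫_ℂ) →
      ∃ g : H11, ι1 g = g1 ∧ δ g = h0)
    (γ1 : H11 →L[ℂ] G)
    (hγ1K : ∀ g : H11, (∀ f : H01, ⟪d f, ι1 g⟫_ℂ = ⟪ι0 f, δ g⟫_ℂ) → γ1 g = 0)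
    (hγ1N : ∀ (g : H11) (n : H01),
      (∃ h : H01, ι0 h = δ g ∧ d h = -(ι1 g)) → ι0 n = δ g → γ1 g = -(γ0 n))
    : ∀ (f0 g0 : H01) (gf gg : H11), ι1 gf = d f0 → ι1 gg = d g0 →
      ∀ n m a b : H01,
      (∃ g : H11, ι1 g = d n ∧ δ g = -(ι0 n)) → γ0 n = γ0 f0 →
      (∃ g : H11, ι1 g = d m ∧ δ g = -(ι0 m)) → γ0 m = γ0 g0 →
      (∃ g : H11, ι1 g = d a ∧ δ g = -(ι0 a)) → γ0 a = γ1 gf →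
      (∃ g : H11, ι1 g = d b ∧ δ g = -(ι0 b)) → γ0 b = γ1 gg →
      ⟪δ gf, ι0 g0⟫_ℂ - ⟪ι0 f0, δ gg⟫_ℂ = ⟪n, b⟫_ℂ - ⟪a, m⟫_ℂ :=
  statement_9_general ι0 d γ0 ι1 δ hgraph0 hgraph1 hadj1 hadj2 γ1 hγ1K hγ1N
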